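/- arXiv:math/0405178 — 7 statements merged into one kernel-verified Lean document; each statement's English description precedes it below -/
import Mathlib

section
/- Two elements t^r · ι(u) and t^s · ι(v) of G (with r, s ∈ ℤ and u, v ∈ F) are conjugate in G if and only if r = s and there exists an integer k such that φ^k(u) is φ^r-twisted conjugate to v, i.e. there exist k ∈ ℤ and g ∈ F with v = (φ^r g)⁻¹ · (φ^k u) · g. -/
/-- `u` and `v` are `φ`-twisted conjugate: there is `g` with `v = (φ g)⁻¹ * u * g`. -/
def TwistedConj {F : Type*} [Group F] (φ : MulAut F) (u v : F) : Prop :=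
  ∃ g : F, v = (φ g)⁻¹ * u * g

/-!
`G` is the semidirect product `F ⋊ ⟨t⟩`: every element has a unique normal form `t ^ k * ι g`,
and normal forms multiply by `t ^ a * ι x * (t ^ b * ι y) = t ^ (a + b) * ι ((φ ^ b) x * y)`.
Writing a conjugator as `t ^ k * ι g` and comparing the normal forms of both sides of
`(t ^ k * ι g) * (t ^ s * ι v) = (t ^ r * ι u) * (t ^ k * ι g)` gives `r = s` and
`(φ ^ r) g * v = (φ ^ k) u * g`, which is the twisted conjugacy.
-/

section NormalForm

variable {F G : Type*} [Group F] [Group G] {φ : MulAut F} {ι : F →* G} {t : G}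

theorem map_mul_zpow_eq_zpow_mul_map (ht : ∀ w, t⁻¹ * ι w * t = ι (φ w)) (m : ℤ) (w : F) :
    ι w * t ^ m = t ^ m * ι ((φ ^ m) w) := by
  have step (w : F) : ι w * t = t * ι (φ w) := by rw [← ht]; group
  induction m using Int.induction_on generalizing w with
  | zero => simp
  | succ n ih =>
    rw [zpow_add_one φ, MulAut.mul_apply, add_comm (n : ℤ), zpow_add, zpow_one, mul_assoc t, ← ih,
      ← mul_assoc, step, mul_assoc]
  | pred n ih =>
    refine mul_right_cancel (b := t) ?_
    rw [mul_assoc, mul_assoc, step, ← zpow_add_one, sub_add_cancel, ih, ← mul_assoc,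
      ← zpow_add_one, sub_add_cancel, ← MulAut.mul_apply, ← zpow_one_add, add_sub_cancel]

theorem zpow_mul_map_mul_zpow_mul_map (ht : ∀ w, t⁻¹ * ι w * t = ι (φ w)) (a b : ℤ) (x y : F) :
    t ^ a * ι x * (t ^ b * ι y) = t ^ (a + b) * ι ((φ ^ b) x * y) := by
  rw [mul_assoc, ← mul_assoc (ι x), map_mul_zpow_eq_zpow_mul_map ht, map_mul, zpow_add]
  group

theorem zpow_mul_map_eq_zpow_mul_map_iff (hι : Function.Injective ι)
    (htor : ∀ k : ℤ, t ^ k ∈ Set.range ι → k = 0) {a b : ℤ} {x y : F} :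
    t ^ a * ι x = t ^ b * ι y ↔ a = b ∧ x = y := by
  refine ⟨fun h => ?_, by rintro ⟨rfl, rfl⟩; rfl⟩
  have hab : t ^ (a - b) = ι (y * x⁻¹) :=
    calc t ^ (a - b) = (t ^ b)⁻¹ * (t ^ a * ι x) * (ι x)⁻¹ := by group
      _ = ι (y * x⁻¹) := by rw [h]; simp
  obtain rfl : a = b := by linarith [htor _ ⟨_, hab.symm⟩]
  exact ⟨rfl, hι (mul_left_cancel h)⟩

theorem exists_eq_zpow_mul_map (ht : ∀ w, t⁻¹ * ι w * t = ι (φ w))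
    (hgen : Subgroup.closure (Set.range ι ∪ {t}) = ⊤) (x : G) :
    ∃ (k : ℤ) (g : F), x = t ^ k * ι g := by
  induction (hgen ▸ Subgroup.mem_top x : x ∈ Subgroup.closure _) using
    Subgroup.closure_induction with
  | mem y hy =>
    rcases hy with ⟨w, rfl⟩ | rfl
    · exact ⟨0, w, by simp⟩
    · exact ⟨1, 1, by simp⟩
  | one => exact ⟨0, 1, by simp⟩
  | mul y z _ _ hy hz =>
    obtain ⟨⟨k, g, rfl⟩, ⟨m, h, rfl⟩⟩ := And.intro hy hz
    exact ⟨k + m, _, zpow_mul_map_mul_zpow_mul_map ht k m g h⟩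
  | inv y _ hy =>
    obtain ⟨k, g, rfl⟩ := hy
    refine ⟨-k, (φ ^ (-k)) g⁻¹, ?_⟩
    rw [mul_inv_rev, ← map_inv, ← zpow_neg, map_mul_zpow_eq_zpow_mul_map ht]

theorem semiconjBy_zpow_mul_map_iff (hι : Function.Injective ι)
    (ht : ∀ w, t⁻¹ * ι w * t = ι (φ w)) (htor : ∀ k : ℤ, t ^ k ∈ Set.range ι → k = 0)
    {r s k : ℤ} {u v g : F} :
    SemiconjBy (t ^ k * ι g) (t ^ s * ι v) (t ^ r * ι u) ↔
      r = s ∧ v = ((φ ^ r) g)⁻¹ * (φ ^ k) u * g := by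
  rw [SemiconjBy, zpow_mul_map_mul_zpow_mul_map ht, zpow_mul_map_mul_zpow_mul_map ht,
    zpow_mul_map_eq_zpow_mul_map_iff hι htor, add_comm k, add_left_inj]
  constructor
  · rintro ⟨rfl, h⟩
    refine ⟨rfl, ?_⟩
    rw [mul_assoc, ← h]; group
  · rintro ⟨rfl, rfl⟩
    refine ⟨rfl, ?_⟩
    group

end NormalForm

/-- In the [f.g. free]-by-(infinite cyclic) group `G`, the elements `t^r * ι u` and
`t^s * ι v` are conjugate iff `r = s` and `φ^k u` is `φ^r`-twisted conjugate to `v`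
for some integer `k`. -/
theorem isConj_iff_twistedConj {α : Type*} {G : Type*} [Group G]
    (φ : MulAut (FreeGroup α)) (ι : FreeGroup α →* G) (hι : Function.Injective ι)
    (t : G) (ht : ∀ w : FreeGroup α, t⁻¹ * ι w * t = ι (φ w))
    (hgen : Subgroup.closure (Set.range ι ∪ {t}) = ⊤)
    (htor : ∀ k : ℤ, t ^ k ∈ Set.range ι → k = 0)
    (r s : ℤ) (u v : FreeGroup α) :
    IsConj (t ^ r * ι u) (t ^ s * ι v) ↔
      r = s ∧ ∃ k : ℤ, TwistedConj (φ ^ r) ((φ ^ k) u) v := by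
  rw [isConj_comm, isConj_iff]
  simp_rw [mul_inv_eq_iff_eq_mul]
  constructor
  · rintro ⟨c, hc⟩
    obtain ⟨k, g, rfl⟩ := exists_eq_zpow_mul_map ht hgen c
    obtain ⟨rfl, hv⟩ := (semiconjBy_zpow_mul_map_iff hι ht htor).mp hc
    exact ⟨rfl, k, g, hv⟩
  · rintro ⟨rfl, k, g, hv⟩
    exact ⟨t ^ k * ι g, (semiconjBy_zpow_mul_map_iff hι ht htor).mpr ⟨rfl, hv⟩⟩
end

section
/- For every g ∈ F and every v ∈ F: v = (φ g)⁻¹ · u · g holds in F if and only if ι(g)⁻¹ · z · ι(g) ∈ Fix(γ_{ι v} ∘ ψ). Consequently u is φ-twisted conjugate to v if and only if Fix(γ_{ι v} ∘ ψ) contains an element of the form ι(g)⁻¹ · z · ι(g) with g ∈ F, and such a g is then a φ-twisted conjugating element. -/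
open FreeGroup SemidirectProduct

/-- The shift automorphism of `FreeGroup (ℤ × α)`, shifting the first index by 1. -/
private def shiftAut (α : Type*) : MulAut (FreeGroup (ℤ × α)) :=
  freeGroupCongr (Equiv.prodCongr (Equiv.addRight (1 : ℤ)) (Equiv.refl α))

/-- If the image of `x` under `FreeGroup.map Option.some` commutes with `of none`,
then `x = 1`. -/
private lemma comm_with_none_eq_one {α : Type*} (x : FreeGroup α)
    (h : FreeGroup.map Option.some x * FreeGroup.of none
        = FreeGroup.of none * FreeGroup.map Option.some x) : x = 1 := by
  classical
  set σ := shiftAut α with hσ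
  let φact : Multiplicative ℤ →* MulAut (FreeGroup (ℤ × α)) := zpowersHom _ σ
  let j₀ : FreeGroup α →* FreeGroup (ℤ × α) := FreeGroup.map (fun a => ((0 : ℤ), a))
  let Θ : FreeGroup (Option α) →* FreeGroup (ℤ × α) ⋊[φact] Multiplicative ℤ :=
    FreeGroup.lift (fun o => Option.elim o (inr (Multiplicative.ofAdd 1))
      (fun a => inl (FreeGroup.of ((0 : ℤ), a))))
  have hΘι : ∀ w : FreeGroup α, Θ (FreeGroup.map Option.some w) = inl (j₀ w) := by
    intro w
    have : Θ.comp (FreeGroup.map Option.some)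
        = (inl : _ →* FreeGroup (ℤ × α) ⋊[φact] Multiplicative ℤ).comp j₀ := by
      apply FreeGroup.ext_hom
      intro a
      simp [Θ, j₀, FreeGroup.map.of, FreeGroup.lift_apply_of]
    exact DFunLike.congr_fun this w
  have h2 := congrArg Θ h
  rw [Θ.map_mul, Θ.map_mul, hΘι] at h2
  have hz : Θ (FreeGroup.of (none : Option α)) = inr (Multiplicative.ofAdd 1) := by
    simp [Θ, FreeGroup.lift_apply_of]
  rw [hz] at h2
  have h3 : inl (j₀ x) * inr (Multiplicative.ofAdd (1:ℤ))
      = (inl (φact (Multiplicative.ofAdd 1) (j₀ x))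
          : FreeGroup (ℤ × α) ⋊[φact] Multiplicative ℤ) * inr (Multiplicative.ofAdd 1) := by
    rw [h2, inl_aut]
    simp [mul_assoc]
  have h4 : j₀ x = φact (Multiplicative.ofAdd 1) (j₀ x) :=
    inl_injective (mul_right_cancel h3)
  have hφ1 : φact (Multiplicative.ofAdd (1:ℤ)) = σ := by
    simp [φact]
  rw [hφ1] at h4
  let ρ : FreeGroup (ℤ × α) →* FreeGroup α :=
    FreeGroup.lift (fun p => if p.1 = 0 then FreeGroup.of p.2 else 1)
  have hρ0 : ρ (j₀ x) = x := by
    have : ρ.comp j₀ = MonoidHom.id _ := by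
      apply FreeGroup.ext_hom
      intro a
      simp [ρ, j₀, FreeGroup.map.of, FreeGroup.lift_apply_of]
    exact DFunLike.congr_fun this x
  have hρ1 : ρ (σ (j₀ x)) = 1 := by
    have : ρ.comp (σ.toMonoidHom.comp j₀) = 1 := by
      apply FreeGroup.ext_hom
      intro a
      simp [ρ, j₀, σ, shiftAut, FreeGroup.map.of, FreeGroup.lift_apply_of]
    exact DFunLike.congr_fun this x
  rw [← hρ0, h4, hρ1]

private lemma conj_eq_conj_iff {G : Type*} [Group G] (a b z : G) :
    a⁻¹ * z * a = b⁻¹ * z * b ↔ b * a⁻¹ * z = z * (b * a⁻¹) := by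
  constructor
  · intro h
    calc b * a⁻¹ * z = b * (a⁻¹ * z * a) * a⁻¹ := by group
      _ = b * (b⁻¹ * z * b) * a⁻¹ := by rw [h]
      _ = z * (b * a⁻¹) := by group
  · intro h
    calc a⁻¹ * z * a
        = a⁻¹ * ((b * a⁻¹)⁻¹ * (b * a⁻¹ * z)) * a := by group
      _ = a⁻¹ * ((b * a⁻¹)⁻¹ * (z * (b * a⁻¹))) * a := by rw [h]
      _ = b⁻¹ * z * b := by group

/-- With `ι : FreeGroup α →* FreeGroup (Option α)` induced by `Option.some`,
`z = FreeGroup.of none`, and `ψ` the extension of `φ` with `ψ z = ι u * z * (ι u)⁻¹`: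
`v = (φ g)⁻¹ * u * g` iff `(ι g)⁻¹ * z * ι g` is fixed by `γ_{ι v} ∘ ψ`.
Consequently `u ∼_φ v` iff the fixed subgroup of `γ_{ι v} ∘ ψ` contains an element of
the form `(ι g)⁻¹ * z * ι g`, and such a `g` is a twisted conjugating element. -/
theorem twistedConj_iff_fixed {α : Type*}
    (φ : MulAut (FreeGroup α)) (u : FreeGroup α)
    (ι : FreeGroup α →* FreeGroup (Option α)) (hι : ι = FreeGroup.map Option.some)
    (z : FreeGroup (Option α)) (hz : z = FreeGroup.of none)
    (ψ : MulAut (FreeGroup (Option α)))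
    (hψ : ∀ w : FreeGroup α, ψ (ι w) = ι (φ w))
    (hψz : ψ z = ι u * z * (ι u)⁻¹) (v : FreeGroup α) :
    (∀ g : FreeGroup α,
      (v = (φ g)⁻¹ * u * g ↔
        (ι v)⁻¹ * ψ ((ι g)⁻¹ * z * ι g) * ι v = (ι g)⁻¹ * z * ι g)) ∧
    (TwistedConj φ u v ↔
      ∃ g : FreeGroup α,
        (ι v)⁻¹ * ψ ((ι g)⁻¹ * z * ι g) * ι v = (ι g)⁻¹ * z * ι g) := by
  have hmain : ∀ g : FreeGroup α,
      (v = (φ g)⁻¹ * u * g ↔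
        (ι v)⁻¹ * ψ ((ι g)⁻¹ * z * ι g) * ι v = (ι g)⁻¹ * z * ι g) := by
    intro g
    have hexp : (ι v)⁻¹ * ψ ((ι g)⁻¹ * z * ι g) * ι v
        = (ι (u⁻¹ * φ g * v))⁻¹ * z * (ι (u⁻¹ * φ g * v)) := by
      simp only [_root_.map_mul, _root_.map_inv, hψ, hψz]
      group
    rw [hexp, conj_eq_conj_iff, ← _root_.map_inv ι, ← _root_.map_mul ι]
    constructor
    · intro hv
      have harg : g * (u⁻¹ * φ g * v)⁻¹ = 1 := by rw [hv]; group
      rw [harg]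
      simp
    · intro hcomm
      rw [hι, hz] at hcomm
      have h1 : g * (u⁻¹ * φ g * v)⁻¹ = 1 := comm_with_none_eq_one _ hcomm
      have h2 : g = u⁻¹ * φ g * v := mul_inv_eq_one.mp h1
      nth_rewrite 2 [h2]
      group
  exact ⟨hmain, exists_congr hmain⟩
end

section
/- Let w ∈ FreeGroup α and let ι : FreeGroup α →* FreeGroup (Option α) be the homomorphism induced by Option.some. If ι(w) commutes with the generator z = FreeGroup.of none in FreeGroup (Option α), then w = 1. -/
/-!
`FreeGroup (Option α)` acts on two copies of `FreeGroup α`: the new letter `none` swaps the copies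
and a letter `a` multiplies the first copy on the left by `a`. The image of `w` then multiplies the
first copy by `w` and fixes the second, and conjugating it by the swap moves that action to the
second copy; so commuting with the swap forces left multiplication by `w` to be the identity.
-/

open Equiv

theorem Equiv.Perm.eq_of_commute_sumCongr_sumComm {β : Type*} {p q : Perm β}
    (h : Commute (p.sumCongr q) (sumComm β β)) : p = q := by
  ext x
  simpa using congrArg (· (Sum.inr x)) h.eq

namespace FreeGroup

variable (α : Type*)

def optionToPermSum : FreeGroup (Option α) →* Perm (FreeGroup α ⊕ FreeGroup α) :=
  lift fun o => o.elim (sumComm _ _) fun a => (MulAction.toPerm (of a)).sumCongr 1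

variable {α}

@[simp]
theorem optionToPermSum_of_none : optionToPermSum α (of none) = sumComm _ _ := lift_apply_of

theorem optionToPermSum_map_some (w : FreeGroup α) :
    optionToPermSum α (map some w) = (MulAction.toPerm w).sumCongr 1 := by
  have : (optionToPermSum α).comp (map some) =
      (Perm.sumCongrHom _ _).comp ((MulAction.toPermHom _ _).prod 1) := by
    ext a
    simp [optionToPermSum]
  exact DFunLike.congr_fun this w

end FreeGroup

open FreeGroup in
/-- If the image of `w : FreeGroup α` in `FreeGroup (Option α)` (under the embedding
induced by `Option.some`) commutes with the extra generator `z = FreeGroup.of none`,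
then `w = 1`. -/
theorem eq_one_of_commute_with_new_letter {α : Type*} (w : FreeGroup α)
    (h : Commute (FreeGroup.map Option.some w) (FreeGroup.of (none : Option α))) :
    w = 1 := by
  have hrep := h.map (optionToPermSum α)
  rw [optionToPermSum_map_some, optionToPermSum_of_none] at hrep
  have hperm : MulAction.toPerm w = (1 : Perm (FreeGroup α)) :=
    Perm.eq_of_commute_sumCongr_sumComm hrep
  simpa using congrArg (· 1) hperm
end

section
/- For every v ∈ F, the fixed subgroup Fix(γ_{ι v} ∘ ψ) contains an element of the form ι(g)⁻¹ · z · ι(g) for some g ∈ F if and only if it contains some element that does not lie in the image of ι (i.e., some word involving the letter z). -/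
/-!
Write `ι = map some` and `z = of none`. Every element of `F'` outside `ι F` is uniquely of the form
`ι a · z^ε · y` where the reduced word of `y` does not start with `z^{-ε}`: the prefix `a` is the
part of the reduced word before its first `z`-letter.

Put `θ = γ_{ι v} ∘ ψ`. It maps `ι F` injectively into itself and `θ z = ι c · z · (ι c)⁻¹`
with `c = v⁻¹ u`, so `σ = (ι c)⁻¹ · θ(-) · ι c` fixes `z`. Such a `σ` preserves these normal
forms letter by letter, hence `θ (ι a · z^ε · y) = ι (a' c) · z^ε · (σ y · (ι c)⁻¹)`, with
`θ (ι a) = ι a'`, is again in normal form. If `x = ι a · z^ε · y` is fixed by `θ`, comparing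
prefixes gives `a = a' c`, which says precisely that `θ` fixes `ι a · z · (ι a)⁻¹`. Conversely,
no conjugate of `z` lies in `ι F`.
-/

namespace FreeGroup

variable {α : Type*}

theorem map_mk_singleton_of_map_of {f : FreeGroup α →* FreeGroup α} {x : α}
    (hf : f (of x) = of x) (ε : Bool) : f (mk [(x, ε)]) = mk [(x, ε)] := by
  cases ε
  · rw [show mk [(x, false)] = (of x)⁻¹ from rfl, _root_.map_inv f, hf]
  · exact hf

variable [DecidableEq α]

theorem toWord_map_of_injective {β : Type*} [DecidableEq β] {f : α → β}
    (hf : Function.Injective f) (w : FreeGroup α) :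
    (map f w).toWord = w.toWord.map fun l => (f l.1, l.2) := by
  conv_lhs => rw [← mk_toWord (x := w), map.mk, toWord_mk]
  refine IsReduced.reduce_eq ((List.isChain_map _).mpr ?_)
  exact (isReduced_toWord (x := w)).imp fun _ _ h hab => h (hf hab)

theorem notMem_startsWith_iff_isReduced_cons {l : α × Bool} {y : FreeGroup α} :
    y ∉ startsWith (l.1, !l.2) ↔ IsReduced (l :: y.toWord) := by
  rcases hy : y.toWord with _ | ⟨⟨b₁, b₂⟩, t⟩
  · simp [startsWith, hy]
  · have ht : IsReduced ((b₁, b₂) :: t) := hy ▸ isReduced_toWord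
    obtain ⟨l₁, l₂⟩ := l
    simp only [startsWith, Set.mem_ofPred_eq, hy, List.getElem?_cons_zero, Option.some.injEq,
      Prod.mk.injEq, isReduced_cons_cons, ht, and_true]
    cases l₂ <;> cases b₂ <;> simp [eq_comm]

theorem toWord_mk_singleton_mul {l : α × Bool} {y : FreeGroup α}
    (hy : y ∉ startsWith (l.1, !l.2)) : (mk [l] * y).toWord = l :: y.toWord := by
  rw [← mk_toWord (x := y), mul_mk, toWord_mk, toWord_mk, reduce_toWord, List.singleton_append,
    (notMem_startsWith_iff_isReduced_cons.mp hy).reduce_eq]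

theorem toWord_map_some (w : FreeGroup α) :
    (map some w).toWord = w.toWord.map fun l => (some l.1, l.2) :=
  toWord_map_of_injective (Option.some_injective α) w

theorem fst_ne_none_of_mem_toWord_map_some {w : FreeGroup α} {l : Option α × Bool}
    (hl : l ∈ (map some w).toWord) : l.1 ≠ none := by
  rw [toWord_map_some] at hl
  obtain ⟨l, -, rfl⟩ := List.mem_map.mp hl
  simp

theorem map_some_notMem_startsWith_none (w : FreeGroup α) (b : Bool) :
    map some w ∉ startsWith ((none : Option α), b) := by
  rw [startsWith, Set.mem_ofPred_eq, toWord_map_some]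
  cases w.toWord <;> simp

theorem of_none_notMem_range_map_some : (of none : FreeGroup (Option α)) ∉ (map some).range := by
  rintro ⟨w, hw⟩
  refine fst_ne_none_of_mem_toWord_map_some (w := w) (l := (none, true)) ?_ rfl
  rw [hw, toWord_of]
  exact List.mem_singleton_self _

theorem conj_of_none_notMem_range_map_some (g : FreeGroup α) :
    (map some g)⁻¹ * of none * map some g ∉ (map some).range := by
  intro h
  refine of_none_notMem_range_map_some (α := α) ?_
  rw [show (of none : FreeGroup (Option α)) =
    map some g * ((map some g)⁻¹ * of none * map some g) * (map some g)⁻¹ by group]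
  exact mul_mem (mul_mem ⟨g, rfl⟩ h) (inv_mem ⟨g, rfl⟩)

theorem toWord_map_some_mul_mk_mul {a : FreeGroup α} {ε : Bool} {y : FreeGroup (Option α)}
    (hy : y ∉ startsWith (none, !ε)) :
    (map some a * mk [(none, ε)] * y).toWord = (map some a).toWord ++ (none, ε) :: y.toWord := by
  rw [mul_assoc, toWord_mul, ← toWord_mk_singleton_mul hy]
  refine IsReduced.reduce_eq (List.IsChain.append isReduced_toWord isReduced_toWord ?_)
  intro l hl l' hl' hll'
  rw [toWord_mk_singleton_mul hy, List.head?_cons, Option.mem_some_iff] at hl'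
  subst hl'
  exact absurd hll' (fst_ne_none_of_mem_toWord_map_some (List.mem_of_mem_getLast? hl))

theorem map_some_mul_mk_mul_mem_startsWith_iff {a : FreeGroup α} {ε b : Bool}
    {y : FreeGroup (Option α)} (hy : y ∉ startsWith (none, !ε)) :
    map some a * mk [(none, ε)] * y ∈ startsWith (none, b) ↔ a = 1 ∧ ε = b := by
  rw [startsWith, Set.mem_ofPred_eq, toWord_map_some_mul_mk_mul hy, toWord_map_some,
    ← toWord_eq_nil_iff]
  cases a.toWord <;> simp

theorem eq_of_map_some_mul_mk_mul_eq {a b : FreeGroup α} {ε δ : Bool}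
    {y y' : FreeGroup (Option α)} (hy : y ∉ startsWith (none, !ε))
    (hy' : y' ∉ startsWith (none, !δ))
    (h : map some a * mk [(none, ε)] * y = map some b * mk [(none, δ)] * y') : a = b := by
  have prefix_eq : ∀ (c : FreeGroup α) (ε : Bool) (t : List (Option α × Bool)),
      ((map some c).toWord ++ (none, ε) :: t).takeWhile (fun l => l.1.isSome) =
        (map some c).toWord := fun c ε t => by
    rw [List.takeWhile_append_of_pos fun l hl => Option.ne_none_iff_isSome.mp
      (fst_ne_none_of_mem_toWord_map_some hl), List.takeWhile_cons_of_neg (by simp),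
      List.append_nil]
  apply map_injective (Option.some_injective α)
  apply toWord_injective
  rw [← prefix_eq a ε y.toWord, ← prefix_eq b δ y'.toWord, ← toWord_map_some_mul_mk_mul hy,
    ← toWord_map_some_mul_mk_mul hy', h]

theorem exists_eq_map_some_mul_mk_mul {x : FreeGroup (Option α)} (hx : x ∉ (map some).range) :
    ∃ (a : FreeGroup α) (ε : Bool) (y : FreeGroup (Option α)),
      y ∉ startsWith (none, !ε) ∧ x = map some a * mk [(none, ε)] * y := by
  set p := x.toWord.takeWhile fun l => l.1.isSome
  have hp : ∀ l ∈ p, l.1.isSome :=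
    fun l hl => List.mem_takeWhile_imp (p := fun l : Option α × Bool => l.1.isSome) hl
  obtain ⟨M, hM⟩ : ∃ M : List (α × Bool), M.map (fun l => (some l.1, l.2)) = p :=
    ⟨p.pmap (fun l h => (l.1.get h, l.2)) hp, by simp [List.map_pmap]⟩
  have hx_split : p ++ x.toWord.dropWhile (fun l => l.1.isSome) = x.toWord :=
    List.takeWhile_append_dropWhile
  rcases hd : x.toWord.dropWhile (fun l => l.1.isSome) with _ | ⟨⟨o, ε⟩, q⟩
  · refine absurd ⟨mk M, ?_⟩ hx
    rw [map.mk, hM, ← mk_toWord (x := x), ← hx_split, hd, List.append_nil]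
  · have ho : o = none := by
      have := List.head_dropWhile_not (fun l : Option α × Bool => l.1.isSome) (l := x.toWord)
        (by simp [hd])
      simpa [hd] using this
    subst ho
    rw [hd] at hx_split
    have hq : IsReduced ((none, ε) :: q) := (hx_split ▸ isReduced_toWord).infix ⟨p, [], by simp⟩
    refine ⟨mk M, ε, mk q, ?_, ?_⟩
    · rw [notMem_startsWith_iff_isReduced_cons (l := (none, ε)), toWord_mk,
        (hq.infix ⟨[(none, ε)], [], by simp⟩).reduce_eq]
      exact hq
    · rw [map.mk, hM, mul_mk, mul_mk, ← mk_toWord (x := x), ← hx_split]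
      simp

/- The right factor `map some d` is needed for `(ι c)⁻¹ · θ y = σ y · (ι c)⁻¹`; it never cancels
the first `z`-letter. -/
theorem map_mul_map_some_notMem_startsWith {σ : FreeGroup (Option α) →* FreeGroup (Option α)}
    (hσ : Function.Injective σ) (hσι : ∀ a, σ (map some a) ∈ (map some).range)
    (hσz : σ (of none) = of none) (d : FreeGroup α) {b : Bool} {y : FreeGroup (Option α)}
    (hy : y ∉ startsWith (none, b)) : σ y * map some d ∉ startsWith (none, b) := by
  induction hn : y.toWord.length using Nat.strong_induction_on generalizing y b with
  | _ n ih =>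
  by_cases hyι : y ∈ (map some).range
  · obtain ⟨a, rfl⟩ := hyι
    obtain ⟨a', ha'⟩ := hσι a
    rw [← ha', ← _root_.map_mul]
    exact map_some_notMem_startsWith_none _ b
  obtain ⟨a, ε, y', hy', rfl⟩ := exists_eq_map_some_mul_mk_mul hyι
  obtain ⟨a', ha'⟩ := hσι a
  have hlen : y'.toWord.length < n := by
    simp only [← hn, toWord_map_some_mul_mk_mul hy', List.length_append, List.length_cons]
    omega
  have hσy' := ih _ hlen hy' rfl
  have hσy : σ (map some a * mk [(none, ε)] * y') * map some d =
      map some a' * mk [(none, ε)] * (σ y' * map some d) := by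
    rw [_root_.map_mul, _root_.map_mul, ← ha', map_mk_singleton_of_map_of hσz,
      mul_assoc _ _ (map some d)]
  have ha : a' = 1 ↔ a = 1 := by
    rw [← map_eq_one_iff _ (map_injective (Option.some_injective α)), ha', map_eq_one_iff _ hσ,
      map_eq_one_iff _ (map_injective (Option.some_injective α))]
  rw [hσy, map_some_mul_mk_mul_mem_startsWith_iff hσy', ha]
  rwa [map_some_mul_mk_mul_mem_startsWith_iff hy'] at hy

theorem exists_conj_of_none_fixed_of_fixed_notMem_range
    {θ : FreeGroup (Option α) →* FreeGroup (Option α)} (hθ : Function.Injective θ)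
    (hθι : ∀ a, θ (map some a) ∈ (map some).range) {c : FreeGroup α}
    (hθz : θ (of none) = map some c * of none * (map some c)⁻¹) {x : FreeGroup (Option α)}
    (hx : θ x = x) (hxι : x ∉ (map some).range) :
    ∃ g : FreeGroup α,
      θ ((map some g)⁻¹ * of none * map some g) = (map some g)⁻¹ * of none * map some g := by
  let σ := (MulAut.conj (map some c)⁻¹).toMonoidHom.comp θ
  have hσ_apply : ∀ w, σ w = (map some c)⁻¹ * θ w * map some c := fun w => by simp [σ]
  have hθσ : ∀ w, θ w = map some c * σ w * (map some c)⁻¹ := fun w => by rw [hσ_apply]; group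
  have hσ : Function.Injective σ := (MulAut.conj _).injective.comp hθ
  have hσι : ∀ a, σ (map some a) ∈ (map some).range := fun a => by
    obtain ⟨a', ha'⟩ := hθι a
    exact ⟨c⁻¹ * a' * c, by rw [hσ_apply, ← ha', _root_.map_mul, _root_.map_mul, _root_.map_inv]⟩
  have hσz : σ (of none) = of none := by rw [hσ_apply, hθz]; group
  obtain ⟨a, ε, y, hy, rfl⟩ := exists_eq_map_some_mul_mk_mul hxι
  obtain ⟨a', ha'⟩ := hθι a
  have hθx : θ (map some a * mk [(none, ε)] * y) =
      map some (a' * c) * mk [(none, ε)] * (σ y * map some c⁻¹) := by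
    rw [_root_.map_mul, _root_.map_mul, ← ha', hθσ (mk _), hθσ y, map_mk_singleton_of_map_of hσz,
      _root_.map_mul, _root_.map_inv]
    group
  have hac : map some a = map some a' * map some c := by
    rw [← _root_.map_mul, eq_of_map_some_mul_mk_mul_eq hy
      (map_mul_map_some_notMem_startsWith hσ hσι hσz c⁻¹ hy) (hx.symm.trans hθx)]
  refine ⟨a⁻¹, ?_⟩
  simp only [_root_.map_mul, _root_.map_inv, inv_inv]
  rw [← ha', hθz, hac]
  group

end FreeGroup

open FreeGroup

/-- The fixed subgroup of `γ_{ι v} ∘ ψ` contains an element of the form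
`(ι g)⁻¹ * z * ι g` with `g ∈ F` iff it contains some element outside the image of `ι`
(i.e. some word involving the letter `z`). -/
theorem fixed_conj_z_iff_fixed_outside_range {α : Type*}
    (φ : MulAut (FreeGroup α)) (u : FreeGroup α)
    (ι : FreeGroup α →* FreeGroup (Option α)) (hι : ι = FreeGroup.map Option.some)
    (z : FreeGroup (Option α)) (hz : z = FreeGroup.of none)
    (ψ : MulAut (FreeGroup (Option α)))
    (hψ : ∀ w : FreeGroup α, ψ (ι w) = ι (φ w))
    (hψz : ψ z = ι u * z * (ι u)⁻¹) (v : FreeGroup α) :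
    (∃ g : FreeGroup α,
        (ι v)⁻¹ * ψ ((ι g)⁻¹ * z * ι g) * ι v = (ι g)⁻¹ * z * ι g) ↔
      (∃ x : FreeGroup (Option α),
        (ι v)⁻¹ * ψ x * ι v = x ∧ x ∉ Set.range ι) := by
  classical
  subst hι hz
  let θ : MulAut (FreeGroup (Option α)) := MulAut.conj (map some v)⁻¹ * ψ
  have hθ : ∀ x, (map some v)⁻¹ * ψ x * map some v = θ x := fun x => by simp [θ]
  simp only [hθ]
  constructor
  · rintro ⟨g, hg⟩
    exact ⟨_, hg, conj_of_none_notMem_range_map_some g⟩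
  · rintro ⟨x, hx, hxι⟩
    refine exists_conj_of_none_fixed_of_fixed_notMem_range (θ := θ.toMonoidHom) θ.injective
      (fun a => ⟨v⁻¹ * φ a * v, ?_⟩) (c := v⁻¹ * u) ?_ hx hxι
    · simp [← hθ, hψ]
    · show θ (of none) = _
      rw [← hθ, hψz, _root_.map_mul, _root_.map_inv]
      group
end

section
/- Let φ be an automorphism of a group F and let u, v, g ∈ F satisfy v = (φ g)⁻¹ · u · g. Then for every p ≥ 1, v_{φ,p} = (φ^p g)⁻¹ · u_{φ,p} · g. In particular, if u is φ-twisted conjugate to v then u_{φ,p} is φ^p-twisted conjugate to v_{φ,p} for every p ≥ 1, with the same twisted conjugating element. -/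
/-- `twistedPow φ w p = φ^(p-1) w * φ^(p-2) w * ⋯ * φ w * w`. -/
def twistedPow {F : Type*} [Group F] (φ : MulAut F) (w : F) : ℕ → F
  | 0 => 1
  | p + 1 => (φ ^ p) w * twistedPow φ w p

/-- If `v = (φ g)⁻¹ * u * g`, then `v_{φ,p} = (φ^p g)⁻¹ * u_{φ,p} * g` for all `p ≥ 1`;
in particular `u ∼_φ v` implies `u_{φ,p} ∼_{φ^p} v_{φ,p}` with the same conjugator. -/
theorem twistedPow_twistedConj {F : Type*} [Group F]
    (φ : MulAut F) (u v : F) :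
    (∀ g : F, v = (φ g)⁻¹ * u * g → ∀ p : ℕ, 1 ≤ p →
      twistedPow φ v p = ((φ ^ p) g)⁻¹ * twistedPow φ u p * g) ∧
    (TwistedConj φ u v → ∀ p : ℕ, 1 ≤ p →
      TwistedConj (φ ^ p) (twistedPow φ u p) (twistedPow φ v p)) := by
  have main : ∀ g : F, v = (φ g)⁻¹ * u * g → ∀ p : ℕ, 1 ≤ p →
      twistedPow φ v p = ((φ ^ p) g)⁻¹ * twistedPow φ u p * g := by
    intro g hg p hp
    induction p with
    | zero => omega
    | succ n ih =>
      rcases Nat.eq_zero_or_pos n with hn | hn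
      · subst hn
        simp [twistedPow, hg]
      · have hphin : (φ ^ n) v = ((φ ^ (n+1)) g)⁻¹ * (φ ^ n) u * (φ ^ n) g := by
          rw [hg]
          simp [pow_succ, map_mul]
        rw [twistedPow, twistedPow, ih hn, hphin]
        group
  refine ⟨main, ?_⟩
  rintro ⟨g, hg⟩ p hp
  exact ⟨g, main g hg p hp⟩
end

section
/- Let φ be an automorphism of a group F and u ∈ F. Then for all integers k, r and every p ≥ 1, the element φ^k(u_{φ^r,p}) is φ^{r p}-twisted conjugate to φ^{k+r}(u_{φ^r,p}). -/
lemma twistedPow_shift {F : Type*} [Group F] (ψ : MulAut F) (u : F) (p : ℕ) :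
    ψ (twistedPow ψ u p) * u = (ψ ^ p) u * twistedPow ψ u p := by
  induction p with
  | zero => simp [twistedPow]
  | succ n ih =>
      simp only [twistedPow, map_mul, pow_succ]
      rw [mul_assoc, ih]
      simp only [mul_assoc, ← MulAut.mul_apply, ← pow_succ, ← pow_succ']

/-- For all integers `k, r` and `p ≥ 1`, `φ^k (u_{φ^r,p})` is `φ^{rp}`-twisted conjugate
to `φ^{k+r} (u_{φ^r,p})`. -/
theorem twistedConj_pow_shift {F : Type*} [Group F] (φ : MulAut F) (u : F)
    (k r : ℤ) (p : ℕ) (hp : 1 ≤ p) :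
    TwistedConj (φ ^ (r * p)) ((φ ^ k) (twistedPow (φ ^ r) u p))
      ((φ ^ (k + r)) (twistedPow (φ ^ r) u p)) := by
  refine ⟨((φ ^ k) u)⁻¹, ?_⟩
  have h := twistedPow_shift (φ ^ r) u p
  have h2 : (φ ^ r) ^ p = φ ^ (r * p) := by
    rw [← zpow_natCast ((φ ^ r)) p, ← zpow_mul]
  rw [h2] at h
  have h3 : (φ ^ (k + r)) (twistedPow (φ ^ r) u p)
      = (φ ^ k) ((φ ^ r) (twistedPow (φ ^ r) u p)) := by
    rw [← MulAut.mul_apply, ← zpow_add]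
  have h4 : (φ ^ (r * ↑p)) (((φ ^ k) u)⁻¹)
      = ((φ ^ (r * ↑p + k)) u)⁻¹ := by
    rw [map_inv, ← MulAut.mul_apply, ← zpow_add]
  rw [h3, h4, inv_inv]
  have h5 : (φ ^ (r * ↑p + k)) u = (φ ^ k) ((φ ^ (r * ↑p)) u) := by
    rw [← MulAut.mul_apply, ← zpow_add, add_comm]
  rw [h5, ← map_mul, ← map_inv, ← map_mul, ← h]
  simp
end

section
/- There exist p ≥ 1 and g ∈ F with v_{φ,p} = (φ^p g)⁻¹ · u_{φ,p} · g (i.e., u_{φ,p} is φ^p-twisted conjugate to v_{φ,p} for some p ≥ 1) if and only if there exists g ∈ F with ι(g)⁻¹ · z · ι(g) ∈ Per(γ_{ι v} ∘ ψ). -/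
private lemma tp_succ' {F : Type*} [Group F] (φ : MulAut F) (w : F) (p : ℕ) :
    twistedPow φ w (p + 1) = φ (twistedPow φ w p) * w := by
  induction p with
  | zero => simp [twistedPow]
  | succ p ih =>
      have hp : φ ((φ^p) w) = (φ^(p+1)) w := by rw [pow_succ']; rfl
      calc twistedPow φ w (p+2) = (φ^(p+1)) w * twistedPow φ w (p+1) := rfl
        _ = (φ^(p+1)) w * (φ (twistedPow φ w p) * w) := by rw [ih]
        _ = φ ((φ^p) w * twistedPow φ w p) * w := by rw [map_mul, hp, mul_assoc]
        _ = φ (twistedPow φ w (p+1)) * w := rfl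

private lemma comm_eq_one {α : Type*} (c : FreeGroup α)
    (h : FreeGroup.map Option.some c * FreeGroup.of none =
         FreeGroup.of none * FreeGroup.map Option.some c) : c = 1 := by
  classical
  set δ : FreeGroup α → ℤ := fun x => if x = 1 then 1 else 0 with hδ
  let e : Equiv.Perm (FreeGroup α × ℤ) :=
    { toFun := fun p => (p.1, p.2 + δ p.1)
      invFun := fun p => (p.1, p.2 - δ p.1)
      left_inv := fun p => by simp
      right_inv := fun p => by simp }
  let f : Option α → Equiv.Perm (FreeGroup α × ℤ) := fun o =>
    o.elim e (fun a => (Equiv.mulRight (FreeGroup.of a)⁻¹).prodCongr (Equiv.refl ℤ))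
  let k : FreeGroup α →* Equiv.Perm (FreeGroup α × ℤ) :=
    { toFun := fun c => (Equiv.mulRight c⁻¹).prodCongr (Equiv.refl ℤ)
      map_one' := by ext p <;> simp
      map_mul' := by intro a b; ext p <;> simp [mul_assoc]
    }
  have hcomp : (FreeGroup.lift f).comp (FreeGroup.map Option.some) = k := by
    refine FreeGroup.ext_hom _ _ fun a => ?_
    rw [MonoidHom.comp_apply, FreeGroup.map.of, FreeGroup.lift_apply_of]
    rfl
  have H := congrArg (FreeGroup.lift f) h
  rw [map_mul, map_mul] at H
  have h1 : FreeGroup.lift f (FreeGroup.map Option.some c) = k c :=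
    DFunLike.congr_fun hcomp c
  have h2 : FreeGroup.lift f (FreeGroup.of (none : Option α)) = e := FreeGroup.lift_apply_of
  rw [h1, h2] at H
  have H3 := congrFun (congrArg (fun (σ : Equiv.Perm (FreeGroup α × ℤ)) => ⇑σ) H) (c, 0)
  simp [k, e, Equiv.Perm.mul_apply, δ] at H3
  by_contra hc
  simp [hc] at H3

private lemma key_lemma {α : Type*}
    (φ : MulAut (FreeGroup α)) (u v : FreeGroup α)
    (ι : FreeGroup α →* FreeGroup (Option α))
    (z : FreeGroup (Option α))
    (ψ : MulAut (FreeGroup (Option α)))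
    (hψ : ∀ w : FreeGroup α, ψ (ι w) = ι (φ w))
    (hψz : ψ z = ι u * z * (ι u)⁻¹) (g : FreeGroup α) (p : ℕ) :
    ((MulAut.conj (ι v)⁻¹ * ψ) ^ p) ((ι g)⁻¹ * z * ι g) =
      (ι ((twistedPow φ u p)⁻¹ * (φ ^ p) g * twistedPow φ v p))⁻¹ * z *
        ι ((twistedPow φ u p)⁻¹ * (φ ^ p) g * twistedPow φ v p) := by
  induction p with
  | zero => simp [twistedPow]
  | succ p ih =>
      have hstep : ((MulAut.conj (ι v)⁻¹ * ψ) ^ (p+1)) ((ι g)⁻¹ * z * ι g)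
          = (MulAut.conj (ι v)⁻¹ * ψ)
              (((MulAut.conj (ι v)⁻¹ * ψ) ^ p) ((ι g)⁻¹ * z * ι g)) := by
        rw [pow_succ']; rfl
      set E : FreeGroup α := (twistedPow φ u p)⁻¹ * (φ ^ p) g * twistedPow φ v p with hE
      have hEE : u⁻¹ * φ E * v =
          (twistedPow φ u (p+1))⁻¹ * (φ ^ (p+1)) g * twistedPow φ v (p+1) := by
        have h1 : φ ((φ ^ p) g) = (φ ^ (p+1)) g := by rw [pow_succ']; rfl
        rw [hE, map_mul, map_mul, map_inv, h1, tp_succ', tp_succ', mul_inv_rev]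
        group
      rw [hstep, ih, ← hEE]
      have hθ : ∀ x, (MulAut.conj (ι v)⁻¹ * ψ) x = (ι v)⁻¹ * ψ x * ι v := by
        intro x
        simp [MulAut.mul_apply, MulAut.conj_apply, mul_assoc]
      rw [hθ, map_mul, map_mul, map_inv, hψ, hψz]
      simp only [map_mul, map_inv, mul_inv_rev, mul_assoc, inv_inv]

/-- `u_{φ,p}` is `φ^p`-twisted conjugate to `v_{φ,p}` for some `p ≥ 1` iff some element
of the form `(ι g)⁻¹ * z * ι g` belongs to the periodic subgroup of `γ_{ι v} ∘ ψ`. -/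
theorem twistedPow_conj_iff_periodic {α : Type*}
    (φ : MulAut (FreeGroup α)) (u : FreeGroup α)
    (ι : FreeGroup α →* FreeGroup (Option α)) (hι : ι = FreeGroup.map Option.some)
    (z : FreeGroup (Option α)) (hz : z = FreeGroup.of none)
    (ψ : MulAut (FreeGroup (Option α)))
    (hψ : ∀ w : FreeGroup α, ψ (ι w) = ι (φ w))
    (hψz : ψ z = ι u * z * (ι u)⁻¹) (v : FreeGroup α) :
    (∃ p : ℕ, 1 ≤ p ∧ ∃ g : FreeGroup α,
        twistedPow φ v p = ((φ ^ p) g)⁻¹ * twistedPow φ u p * g) ↔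
      (∃ g : FreeGroup α, ∃ k : ℕ, 1 ≤ k ∧
        ((MulAut.conj (ι v)⁻¹ * ψ) ^ k) ((ι g)⁻¹ * z * ι g) = (ι g)⁻¹ * z * ι g) := by
  constructor
  · rintro ⟨p, hp, g, hg⟩
    refine ⟨g, p, hp, ?_⟩
    rw [key_lemma φ u v ι z ψ hψ hψz g p]
    have hEg : (twistedPow φ u p)⁻¹ * (φ ^ p) g * twistedPow φ v p = g := by
      rw [hg]; group
    rw [hEg]
  · rintro ⟨g, k, hk, hfix⟩
    refine ⟨k, hk, g, ?_⟩
    rw [key_lemma φ u v ι z ψ hψ hψz g k] at hfix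
    set E : FreeGroup α := (twistedPow φ u k)⁻¹ * (φ ^ k) g * twistedPow φ v k with hE
    have hc : ι (E * g⁻¹) * z = z * ι (E * g⁻¹) := by
      have h1 := congrArg (fun x => ι E * x * (ι g)⁻¹) hfix
      simp only [map_mul, map_inv, mul_assoc, mul_inv_cancel_left, inv_mul_cancel_left,
        mul_inv_cancel, inv_mul_cancel, mul_one, one_mul] at h1 ⊢
      rw [h1]
    rw [hι, hz] at hc
    have hEg1 : E * g⁻¹ = 1 := comm_eq_one _ hc
    have hEq : (twistedPow φ u k)⁻¹ * (φ ^ k) g * twistedPow φ v k = g := by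
      rw [← hE]
      have := congrArg (fun x => x * g) hEg1
      simpa [mul_assoc] using this
    calc twistedPow φ v k
        = ((φ ^ k) g)⁻¹ * twistedPow φ u k *
            ((twistedPow φ u k)⁻¹ * (φ ^ k) g * twistedPow φ v k) := by group
      _ = ((φ ^ k) g)⁻¹ * twistedPow φ u k * g := by rw [hEq]
end
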